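/- Let q ≥ 3, h = 0 and 0 ≤ β < β_c. Then the unique global minimum point of f_{β,0} on the simplex ℋ is the uniform vector (1/q, …, 1/q). -/

import Mathlib

open Finset

noncomputable section

namespace CWP

/-- The probability simplex ℋ in ℝ^q. -/
def simplexH (q : ℕ) : Set (Fin q → ℝ) :=
  {x | (∑ i, x i) = 1 ∧ ∀ i, 0 ≤ x i}

/-- The free-energy functional f_{β,h} of the Curie-Weiss-Potts model. -/
def fFE (q : ℕ) [NeZero q] (β h : ℝ) (x : Fin q → ℝ) : ℝ :=
  (∑ i, x i * Real.log (q * x i)) - β / 2 * (∑ i, x i ^ 2) - h * x 0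

/-- The set of global minimum points of f_{β,h} on the simplex ℋ. -/
def minSetF (q : ℕ) [NeZero q] (β h : ℝ) : Set (Fin q → ℝ) :=
  {x | x ∈ simplexH q ∧ ∀ y ∈ simplexH q, fFE q β h x ≤ fFE q β h y}

/-- h₀ = log(q-1) - 2(q-2)/q. -/
def h0 (q : ℕ) : ℝ := Real.log ((q : ℝ) - 1) - 2 * ((q : ℝ) - 2) / q

/-- The critical line h_T. -/
def onCriticalLine (q : ℕ) (β h : ℝ) : Prop :=
  0 ≤ h ∧ h < h0 q ∧ h = Real.log ((q : ℝ) - 1) - β * ((q : ℝ) - 2) / (2 * ((q : ℝ) - 1))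

/-- The critical inverse temperature β_c for q > 2. -/
def betaC (q : ℕ) : ℝ := 2 * ((q : ℝ) - 1) / ((q : ℝ) - 2) * Real.log ((q : ℝ) - 1)

end CWP

/-!
A global minimiser `p` exists by compactness. Moving mass `t` from one coordinate to another shows
that the coordinates of `p` are positive, that `log (q s) + 1 - β s` takes the same value at all of
them (first-order condition), and that no two coordinates are equal and larger than `1 / β` (there
`s log (q s) - β s² / 2` is strictly concave). As `log s - β s` is strictly monotone on either side
of `1 / β`, `p` is either uniform or of the form `(a, b, …, b)` with `a > b`.

For the latter, `f(p) - f(uniform) = KL(a ‖ 1/q) - β q / (2 (q - 1)) · (a - 1/q)²`. The sharp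
Pinsker inequality for Bernoulli laws, `KL(t ‖ p) ≥ log ((1 - p) / p) / (1 - 2 p) · (t - p)²` for
`p < 1/2`, has constant exactly `β_c q / (2 (q - 1))` at `p = 1/q`, so this is positive. The
inequality holds because the derivative of the difference, `logit t - 2 c (t - 1/2)`, is odd about
`1/2`, convex on `[1/2, 1)` and vanishes at `1/2` and `1 - p`: the difference has its minima at `p`
and `1 - p`, where it is 0.
-/

open Real Function

theorem isMinOn_of_hasDerivAt_nonpos_of_nonneg {g g' : ℝ → ℝ} {a b c : ℝ}
    (hg : ∀ x ∈ Set.Icc a c, HasDerivAt g (g' x) x) (hab : a ≤ b) (hbc : b ≤ c)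
    (hleft : ∀ x ∈ Set.Ioo a b, g' x ≤ 0) (hright : ∀ x ∈ Set.Ioo b c, 0 ≤ g' x) :
    IsMinOn g (Set.Icc a c) b := by
  have hcont : ContinuousOn g (Set.Icc a c) :=
    fun x hx => (hg x hx).continuousAt.continuousWithinAt
  have hderiv : ∀ {a' c'}, Set.Icc a' c' ⊆ Set.Icc a c →
      ∀ x ∈ interior (Set.Icc a' c'), HasDerivWithinAt g (g' x) (interior (Set.Icc a' c')) x :=
    fun hsub x hx => (hg x (hsub (interior_subset hx))).hasDerivWithinAt
  intro x hx
  rcases le_total x b with hxb | hbx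
  · have hsub : Set.Icc a b ⊆ Set.Icc a c := Set.Icc_subset_Icc_right hbc
    exact antitoneOn_of_hasDerivWithinAt_nonpos (convex_Icc a b) (hcont.mono hsub)
      (hderiv hsub) (by rwa [interior_Icc]) ⟨hx.1, hxb⟩ ⟨hab, le_rfl⟩ hxb
  · have hsub : Set.Icc b c ⊆ Set.Icc a c := Set.Icc_subset_Icc_left hab
    exact monotoneOn_of_hasDerivWithinAt_nonneg (convex_Icc b c) (hcont.mono hsub)
      (hderiv hsub) (by rwa [interior_Icc]) ⟨le_rfl, hbc⟩ ⟨hbx, hx.2⟩ hbx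

lemma sum_update_update {ι α : Type*} [Fintype ι] [DecidableEq ι] (g : α → ℝ) (x : ι → α)
    {i j : ι} (hij : i ≠ j) (a b : α) :
    ∑ k, g (update (update x i a) j b k) =
      ∑ k, g (x k) + (g a - g (x i)) + (g b - g (x j)) := by
  have h := Fintype.sum_eq_add i j hij
    (f := fun k => g (update (update x i a) j b k) - g (x k))
    (fun k hk => by simp [update_of_ne hk.1, update_of_ne hk.2])
  simp only [update_self, update_of_ne hij, Finset.sum_sub_distrib] at h
  linarith

lemma sum_comp_eq_of_forall_ne {q : ℕ} (g : ℝ → ℝ) {x : Fin q → ℝ} {i₀ : Fin q} {b : ℝ}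
    (hx : ∀ k ≠ i₀, x k = b) : ∑ k, g (x k) = g (x i₀) + ((q : ℝ) - 1) * g b := by
  rw [← Finset.add_sum_erase _ _ (Finset.mem_univ i₀),
    Finset.sum_congr rfl fun k hk => by rw [hx k (Finset.ne_of_mem_erase hk)], Finset.sum_const,
    Finset.card_erase_of_mem (Finset.mem_univ i₀), Finset.card_univ, Fintype.card_fin,
    nsmul_eq_mul, Nat.cast_sub i₀.pos, Nat.cast_one]

namespace CWP

def klBern (t p : ℝ) : ℝ := t * log (t / p) + (1 - t) * log ((1 - t) / (1 - p))

def pinskerConst (p : ℝ) : ℝ := log ((1 - p) / p) / (1 - 2 * p)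

def pinskerGap (p t : ℝ) : ℝ := klBern t p - pinskerConst p * (t - p) ^ 2

def pinskerGapDeriv (p t : ℝ) : ℝ := log t - log (1 - t) - 2 * pinskerConst p * (t - 1 / 2)

section Pinsker

variable {p : ℝ}

lemma pinskerConst_mul (hp0 : 0 < p) (hp : p < 1 / 2) :
    pinskerConst p * (1 - 2 * p) = log (1 - p) - log p := by
  rw [pinskerConst, div_mul_cancel₀ _ (by linarith), log_div (by linarith) hp0.ne']

lemma hasDerivAt_pinskerGap (hp0 : 0 < p) (hp : p < 1 / 2) {t : ℝ} (ht0 : 0 < t) (ht1 : t < 1) :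
    HasDerivAt (pinskerGap p) (pinskerGapDeriv p t) t := by
  have h1t : 1 - t ≠ 0 := by linarith
  have h1p : 1 - p ≠ 0 := by linarith
  have hlog : HasDerivAt (fun s => s * log (s / p)) (log (t / p) + 1) t := by
    refine ((hasDerivAt_id t).mul (((hasDerivAt_id t).div_const p).log
      (by positivity))).congr_deriv ?_
    field_simp
    simp [ht0.ne']
  have hlog' : HasDerivAt (fun s => (1 - s) * log ((1 - s) / (1 - p)))
      (-(log ((1 - t) / (1 - p)) + 1)) t := by
    have hs : HasDerivAt (fun s : ℝ => 1 - s) (-1) t := by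
      simpa using (hasDerivAt_id t).const_sub 1
    refine (hs.mul ((hs.div_const (1 - p)).log (div_ne_zero h1t h1p))).congr_deriv ?_
    field_simp
    ring
  have hsq : HasDerivAt (fun s => pinskerConst p * (s - p) ^ 2)
      (pinskerConst p * (2 * (t - p))) t := by
    simpa using (((hasDerivAt_id t).sub_const p).pow 2).const_mul (pinskerConst p)
  refine ((hlog.add hlog').sub hsq).congr_deriv ?_
  rw [pinskerGapDeriv, log_div ht0.ne' hp0.ne', log_div h1t h1p]
  linear_combination (-1 : ℝ) * pinskerConst_mul hp0 hp

lemma pinskerGap_self (hp0 : 0 < p) (hp1 : p < 1) : pinskerGap p p = 0 := by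
  simp [pinskerGap, klBern, div_self hp0.ne', div_self (show 1 - p ≠ 0 by linarith)]

lemma pinskerGap_one_sub_self (hp0 : 0 < p) (hp : p < 1 / 2) : pinskerGap p (1 - p) = 0 := by
  have h := pinskerConst_mul hp0 hp
  rw [pinskerGap, klBern, sub_sub_cancel, log_div (by linarith) hp0.ne',
    log_div hp0.ne' (by linarith)]
  linear_combination (-(1 - 2 * p)) * h

lemma pinskerGapDeriv_one_sub (t : ℝ) : pinskerGapDeriv p (1 - t) = -pinskerGapDeriv p t := by
  rw [pinskerGapDeriv, pinskerGapDeriv, sub_sub_cancel]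
  ring

lemma pinskerGapDeriv_half : pinskerGapDeriv p (1 / 2) = 0 := by
  norm_num [pinskerGapDeriv]

lemma pinskerGapDeriv_one_sub_self (hp0 : 0 < p) (hp : p < 1 / 2) :
    pinskerGapDeriv p (1 - p) = 0 := by
  rw [pinskerGapDeriv, sub_sub_cancel]
  linear_combination (-1 : ℝ) * pinskerConst_mul hp0 hp

lemma convexOn_pinskerGapDeriv : ConvexOn ℝ (Set.Ico (1 / 2) 1) (pinskerGapDeriv p) := by
  have hderiv : ∀ t ∈ Set.Ioo (0 : ℝ) 1,
      HasDerivAt (pinskerGapDeriv p) (1 / t + 1 / (1 - t) - 2 * pinskerConst p) t := by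
    intro t ht
    have hs : HasDerivAt (fun s : ℝ => 1 - s) (-1) t := by
      simpa using (hasDerivAt_id t).const_sub 1
    refine (((hasDerivAt_log ht.1.ne').sub (hs.log (by linarith [ht.2]))).sub
      (((hasDerivAt_id t).sub_const (1 / 2)).const_mul (2 * pinskerConst p))).congr_deriv ?_
    field_simp
    ring
  have hsub : Set.Ico (1 / 2 : ℝ) 1 ⊆ Set.Ioo 0 1 := fun t ht => ⟨by linarith [ht.1], ht.2⟩
  refine MonotoneOn.convexOn_of_deriv (convex_Ico _ _)
    (fun t ht => (hderiv t (hsub ht)).continuousAt.continuousWithinAt)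
    (fun t ht => (hderiv t (hsub (interior_subset ht))).differentiableAt.differentiableWithinAt) ?_
  rw [interior_Ico]
  intro x hx y hy hxy
  have hx0 : 0 < x := by linarith [hx.1]
  have hy1 : 0 < 1 - y := by linarith [hy.2]
  rw [(hderiv x ⟨hx0, hx.2⟩).deriv, (hderiv y ⟨by linarith, hy.2⟩).deriv]
  have key : 1 / (x * (1 - x)) ≤ 1 / (y * (1 - y)) :=
    one_div_le_one_div_of_le (by nlinarith) (by nlinarith [hx.1])
  have hx' : 1 - x ≠ 0 := by linarith [hx.2]
  have hy' : 1 - y ≠ 0 := hy1.ne'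
  rw [one_div_add_one_div hx0.ne' hx', one_div_add_one_div (by linarith) hy']
  simp only [add_sub_cancel] at key ⊢
  linarith

lemma pinskerGapDeriv_nonpos (hp0 : 0 < p) (hp : p < 1 / 2) {t : ℝ}
    (ht : t ∈ Set.Icc (1 / 2) (1 - p)) : pinskerGapDeriv p t ≤ 0 := by
  have h := (convexOn_pinskerGapDeriv (p := p)).le_on_segment (x := 1 / 2) (y := 1 - p)
    ⟨le_rfl, by norm_num⟩ ⟨by linarith, by linarith⟩ (by rwa [segment_eq_Icc (by linarith)])
  rwa [pinskerGapDeriv_half, pinskerGapDeriv_one_sub_self hp0 hp, max_self] at h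

lemma pinskerGapDeriv_nonneg (hp0 : 0 < p) (hp : p < 1 / 2) {t : ℝ}
    (ht : t ∈ Set.Ico (1 - p) 1) : 0 ≤ pinskerGapDeriv p t := by
  have h := (convexOn_pinskerGapDeriv (p := p)).le_right_of_left_le'' (x := 1 / 2) (y := 1 - p)
    ⟨le_rfl, by norm_num⟩ ⟨by linarith [ht.1], ht.2⟩ (by linarith) ht.1
    (by rw [pinskerGapDeriv_half, pinskerGapDeriv_one_sub_self hp0 hp])
  rwa [pinskerGapDeriv_one_sub_self hp0 hp] at h

theorem pinskerConst_mul_sq_le_klBern (hp0 : 0 < p) (hp : p < 1 / 2) {t : ℝ} (ht0 : 0 < t)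
    (ht1 : t < 1) : pinskerConst p * (t - p) ^ 2 ≤ klBern t p := by
  suffices 0 ≤ pinskerGap p t by rw [pinskerGap] at this; linarith
  have hderiv : ∀ {a c}, 0 < a → c < 1 → ∀ x ∈ Set.Icc a c,
      HasDerivAt (pinskerGap p) (pinskerGapDeriv p x) x :=
    fun ha hc x hx => hasDerivAt_pinskerGap hp0 hp (ha.trans_le hx.1) (hx.2.trans_lt hc)
  rcases le_total t (1 / 2) with ht | ht
  · have hmin0 : 0 < min t p := lt_min ht0 hp0
    have hmin := isMinOn_of_hasDerivAt_nonpos_of_nonneg (hderiv hmin0 (by norm_num))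
      (min_le_right t p) hp.le
      (fun x hx => by
        rw [← neg_nonneg, ← pinskerGapDeriv_one_sub]
        exact pinskerGapDeriv_nonneg hp0 hp ⟨by linarith [hx.2], by linarith [hx.1]⟩)
      (fun x hx => by
        rw [← neg_nonpos, ← pinskerGapDeriv_one_sub]
        exact pinskerGapDeriv_nonpos hp0 hp ⟨by linarith [hx.2], by linarith [hx.1]⟩)
    have := hmin ⟨min_le_left t p, ht⟩
    rwa [pinskerGap_self hp0 (by linarith)] at this
  · have hmax : max t (1 - p) < 1 := max_lt ht1 (by linarith)
    have hmin := isMinOn_of_hasDerivAt_nonpos_of_nonneg (hderiv one_half_pos hmax)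
      (by linarith) (le_max_right t (1 - p))
      (fun x hx => pinskerGapDeriv_nonpos hp0 hp ⟨hx.1.le, hx.2.le⟩)
      (fun x hx => pinskerGapDeriv_nonneg hp0 hp ⟨hx.1.le, hx.2.trans hmax⟩)
    have := hmin ⟨ht, le_max_left t (1 - p)⟩
    rwa [pinskerGap_one_sub_self hp0 hp] at this

end Pinsker

def siteFE (q : ℕ) (β s : ℝ) : ℝ := s * log (q * s) - β / 2 * s ^ 2

def siteFEDeriv (q : ℕ) (β s : ℝ) : ℝ := log (q * s) + 1 - β * s

section SiteFE

variable {q : ℕ} [NeZero q] {β : ℝ}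

lemma fFE_zero_eq_sum (x : Fin q → ℝ) : fFE q β 0 x = ∑ i, siteFE q β (x i) := by
  simp [fFE, siteFE, Finset.sum_sub_distrib, Finset.mul_sum]

lemma hasDerivAt_siteFE {s : ℝ} (hs : 0 < s) :
    HasDerivAt (siteFE q β) (siteFEDeriv q β s) s := by
  have hq : (0 : ℝ) < q := Nat.cast_pos.mpr (NeZero.pos q)
  refine (((hasDerivAt_id s).mul (((hasDerivAt_id s).const_mul (q : ℝ)).log
    (by positivity))).sub (((hasDerivAt_id s).pow 2).const_mul (β / 2))).congr_deriv ?_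
  simp only [siteFEDeriv, id]
  field_simp
  ring

lemma siteFEDeriv_sub_siteFEDeriv {x y : ℝ} (hx : 0 < x) (hy : 0 < y) :
    siteFEDeriv q β y - siteFEDeriv q β x = log (y / x) - β * (y - x) := by
  have hq : (q : ℝ) ≠ 0 := NeZero.ne _
  rw [siteFEDeriv, siteFEDeriv, log_mul hq hx.ne', log_mul hq hy.ne', log_div hy.ne' hx.ne']
  ring

lemma siteFEDeriv_lt_siteFEDeriv {x y : ℝ} (hx : 0 < x) (hxy : x < y) (hy : β * y ≤ 1) :
    siteFEDeriv q β x < siteFEDeriv q β y := by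
  have hy0 : 0 < y := hx.trans hxy
  have hlog : (y - x) / y < log (y / x) := by
    have := log_lt_sub_one_of_pos (div_pos hx hy0) (div_ne_one_of_ne hxy.ne)
    rw [← inv_div, log_inv, inv_div] at this
    rw [sub_div, div_self hy0.ne']
    linarith
  have hβ : β * (y - x) ≤ (y - x) / y := by
    rw [le_div_iff₀ hy0]
    nlinarith
  linarith [siteFEDeriv_sub_siteFEDeriv (q := q) (β := β) hx hy0]

lemma siteFEDeriv_lt_siteFEDeriv_of_one_le {x y : ℝ} (hx : 0 < x) (hxβ : 1 ≤ β * x)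
    (hxy : x < y) : siteFEDeriv q β y < siteFEDeriv q β x := by
  have hy0 : 0 < y := hx.trans hxy
  have hlog : log (y / x) < (y - x) / x := by
    have := log_lt_sub_one_of_pos (div_pos hy0 hx) (div_ne_one_of_ne hxy.ne')
    rwa [sub_div, div_self hx.ne']
  have hβ : (y - x) / x ≤ β * (y - x) := by
    rw [div_le_iff₀ hx]
    nlinarith
  linarith [siteFEDeriv_sub_siteFEDeriv (q := q) (β := β) hx hy0]

lemma strictConcaveOn_siteFE (hβ : 0 < β) : StrictConcaveOn ℝ (Set.Ici β⁻¹) (siteFE q β) := by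
  have hpos : ∀ s ∈ Set.Ici β⁻¹, 0 < s := fun s hs => (inv_pos.2 hβ).trans_le hs
  refine StrictAntiOn.strictConcaveOn_of_deriv (convex_Ici _)
    (fun s hs => (hasDerivAt_siteFE (hpos s hs)).continuousAt.continuousWithinAt) ?_
  rw [interior_Ici]
  intro x hx y hy hxy
  rw [(hasDerivAt_siteFE (hpos x (Set.Ioi_subset_Ici_self hx))).deriv,
    (hasDerivAt_siteFE (hpos y (Set.Ioi_subset_Ici_self hy))).deriv]
  refine siteFEDeriv_lt_siteFEDeriv_of_one_le (hpos x (Set.Ioi_subset_Ici_self hx)) ?_ hxy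
  have := mul_le_mul_of_nonneg_left (le_of_lt (Set.mem_Ioi.1 hx)) hβ.le
  rwa [mul_inv_cancel₀ hβ.ne'] at this

end SiteFE

lemma update_update_mem_simplexH {q : ℕ} {x : Fin q → ℝ} (hx : x ∈ simplexH q) {i j : Fin q}
    (hij : i ≠ j) {t : ℝ} (hi : 0 ≤ x i + t) (hj : 0 ≤ x j - t) :
    update (update x i (x i + t)) j (x j - t) ∈ simplexH q := by
  refine ⟨?_, fun k => ?_⟩
  · have := sum_update_update (fun s => s) x hij (x i + t) (x j - t)
    rw [this, hx.1]
    ring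
  · rcases eq_or_ne k j with rfl | hkj
    · simpa using hj
    rcases eq_or_ne k i with rfl | hki
    · simpa [hkj] using hi
    · simpa [hkj, hki] using hx.2 k

section Minimizers

variable {q : ℕ} [NeZero q] {β : ℝ} {p : Fin q → ℝ}

lemma uniform_mem_simplexH : (fun _ => 1 / (q : ℝ)) ∈ simplexH q := by
  have hq : (q : ℝ) ≠ 0 := NeZero.ne _
  refine ⟨?_, fun _ => by positivity⟩
  rw [Finset.sum_const, Finset.card_univ, Fintype.card_fin, nsmul_eq_mul, mul_one_div_cancel hq]

lemma continuous_fFE (h : ℝ) : Continuous (fFE q β h) := by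
  have hq : (q : ℝ) ≠ 0 := NeZero.ne _
  have hentropy : ∀ i, Continuous fun x : Fin q → ℝ => x i * log (q * x i) := fun i =>
    (((continuous_apply i).const_mul (q : ℝ)).mul_log.const_mul (q : ℝ)⁻¹).congr fun x => by
      field_simp
  unfold fFE
  fun_prop

lemma minSetF_nonempty (h : ℝ) : (minSetF q β h).Nonempty := by
  have hK : IsCompact (simplexH q) := by
    convert isCompact_stdSimplex ℝ (Fin q) using 1
    ext x
    exact and_comm
  obtain ⟨p, hp, hmin⟩ :=
    hK.exists_isMinOn ⟨_, uniform_mem_simplexH⟩ (continuous_fFE h).continuousOn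
  exact ⟨p, hp, fun y hy => hmin hy⟩

lemma siteFE_add_le_of_mem_minSetF (hp : p ∈ minSetF q β 0) {i j : Fin q} (hij : i ≠ j)
    {t : ℝ} (hi : 0 ≤ p i + t) (hj : 0 ≤ p j - t) :
    siteFE q β (p i) + siteFE q β (p j) ≤ siteFE q β (p i + t) + siteFE q β (p j - t) := by
  have := hp.2 _ (update_update_mem_simplexH hp.1 hij hi hj)
  rw [fFE_zero_eq_sum, fFE_zero_eq_sum, sum_update_update _ _ hij] at this
  linarith

lemma pos_of_mem_minSetF (hβ : 0 ≤ β) (hp : p ∈ minSetF q β 0) (i : Fin q) : 0 < p i := by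
  refine (hp.1.2 i).lt_of_ne' fun hi => ?_
  obtain ⟨j, hj⟩ : ∃ j, 0 < p j := by
    by_contra! h
    linarith [Finset.sum_nonpos fun j (_ : j ∈ Finset.univ) => h j, hp.1.1]
  have hij : i ≠ j := by rintro rfl; linarith
  have hq : (0 : ℝ) < q := Nat.cast_pos.mpr (NeZero.pos q)
  set t := p j * exp (-(β * p j) - 1)
  have ht0 : 0 < t := by positivity
  have htj : t ≤ p j :=
    mul_le_of_le_one_right hj.le (exp_le_one_iff.2 (by nlinarith))
  have hlogt : log (q * t) = log (q * p j) - β * p j - 1 := by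
    rw [show (q : ℝ) * t = q * p j * exp (-(β * p j) - 1) by ring,
      log_mul (by positivity) (exp_pos _).ne', log_exp]
    ring
  have hlog : (p j - t) * log (q * (p j - t)) ≤ (p j - t) * log (q * p j) := by
    rcases (sub_nonneg.2 htj).eq_or_lt with h | h
    · simp [← h]
    · exact mul_le_mul_of_nonneg_left (log_le_log (by positivity) (by nlinarith)) h.le
  have hpair := siteFE_add_le_of_mem_minSetF hp hij (t := t) (by linarith) (by linarith)
  rw [hi, zero_add] at hpair
  simp only [siteFE, mul_zero, log_zero, ne_eq, OfNat.ofNat_ne_zero,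
    not_false_eq_true, zero_pow, sub_zero, zero_add, hlogt] at hpair
  nlinarith [mul_nonneg hβ (sq_nonneg t)]

lemma siteFEDeriv_eq_of_mem_minSetF (hβ : 0 ≤ β) (hp : p ∈ minSetF q β 0) (i j : Fin q) :
    siteFEDeriv q β (p i) = siteFEDeriv q β (p j) := by
  rcases eq_or_ne i j with rfl | hij
  · rfl
  have hi := pos_of_mem_minSetF hβ hp i
  have hj := pos_of_mem_minSetF hβ hp j
  have hmin : IsLocalMin (fun t => siteFE q β (p i + t) + siteFE q β (p j - t)) 0 := by
    filter_upwards [Ioo_mem_nhds (neg_lt_zero.2 hi) hj] with t ht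
    simpa using siteFE_add_le_of_mem_minSetF hp hij (by linarith [ht.1]) (by linarith [ht.2])
  have hderiv_i : HasDerivAt (siteFE q β) (siteFEDeriv q β (p i)) (p i + 0) := by
    simpa using hasDerivAt_siteFE hi
  have hderiv_j : HasDerivAt (siteFE q β) (siteFEDeriv q β (p j)) (p j - 0) := by
    simpa using hasDerivAt_siteFE hj
  have hderiv := (hderiv_i.comp_const_add (p i) 0).add (hderiv_j.comp_const_sub (p j) 0)
  exact add_neg_eq_zero.1 (hmin.hasDerivAt_eq_zero hderiv)

lemma mul_le_one_of_mem_minSetF_of_eq (hp : p ∈ minSetF q β 0) {i j : Fin q}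
    (hij : i ≠ j) (heq : p i = p j) : β * p i ≤ 1 := by
  by_contra! h
  have hβ0 : 0 < β := by
    by_contra! hβ'
    nlinarith [hp.1.2 i]
  have hinv : β⁻¹ < p i := by
    rw [← one_div, div_lt_iff₀ hβ0]
    linarith
  have hinv0 : 0 < β⁻¹ := inv_pos.2 hβ0
  have hmid := (strictConcaveOn_siteFE (q := q) hβ0).2
    (Set.mem_Ici.2 (by linarith : β⁻¹ ≤ p i + (p i - β⁻¹))) Set.self_mem_Ici (by linarith)
    (by norm_num : (0 : ℝ) < 1 / 2) (by norm_num : (0 : ℝ) < 1 / 2) (by norm_num)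
  have hpair := siteFE_add_le_of_mem_minSetF hp hij (t := p i - β⁻¹) (by linarith)
    (by rw [← heq]; linarith)
  rw [← heq, sub_sub_cancel] at hpair
  rw [smul_eq_mul, smul_eq_mul, smul_eq_mul, smul_eq_mul,
    show 1 / 2 * (p i + (p i - β⁻¹)) + 1 / 2 * β⁻¹ = p i by ring] at hmid
  linarith

lemma eq_of_mem_minSetF_of_mul_le_one (hβ : 0 ≤ β) (hp : p ∈ minSetF q β 0) {i j : Fin q}
    (hi : β * p i ≤ 1) (hj : β * p j ≤ 1) : p i = p j := by
  have hstat := siteFEDeriv_eq_of_mem_minSetF hβ hp i j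
  rcases lt_trichotomy (p i) (p j) with h | h | h
  · exact absurd hstat (siteFEDeriv_lt_siteFEDeriv (pos_of_mem_minSetF hβ hp i) h hj).ne
  · exact h
  · exact absurd hstat (siteFEDeriv_lt_siteFEDeriv (pos_of_mem_minSetF hβ hp j) h hi).ne'

lemma mul_le_one_of_mem_minSetF_of_ne (hβ : 0 ≤ β) (hp : p ∈ minSetF q β 0) {i j : Fin q}
    (hji : j ≠ i) (hi : 1 < β * p i) : β * p j ≤ 1 := by
  by_contra! hj
  have hstat := siteFEDeriv_eq_of_mem_minSetF hβ hp i j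
  rcases lt_trichotomy (p i) (p j) with h | h | h
  · exact absurd hstat
      (siteFEDeriv_lt_siteFEDeriv_of_one_le (pos_of_mem_minSetF hβ hp i) hi.le h).ne'
  · exact (mul_le_one_of_mem_minSetF_of_eq hp hji.symm h).not_gt hi
  · exact absurd hstat
      (siteFEDeriv_lt_siteFEDeriv_of_one_le (pos_of_mem_minSetF hβ hp j) hj.le h).ne

theorem eq_uniform_or_of_mem_minSetF (hq : 2 ≤ q) (hβ : 0 ≤ β) (hp : p ∈ minSetF q β 0) :
    p = (fun _ => 1 / (q : ℝ)) ∨ ∃ i₀ b, 0 < b ∧ b < p i₀ ∧ ∀ k ≠ i₀, p k = b := by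
  by_cases hsmall : ∀ i, β * p i ≤ 1
  · left
    have hk : ∀ k, p k = p 0 :=
      fun k => eq_of_mem_minSetF_of_mul_le_one hβ hp (hsmall k) (hsmall 0)
    have hsum := sum_comp_eq_of_forall_ne (fun s => s) (i₀ := 0) fun k _ => hk k
    rw [hp.1.1] at hsum
    have hq0 : (q : ℝ) ≠ 0 := NeZero.ne _
    funext k
    rw [hk k, eq_div_iff hq0]
    linarith
  · right
    obtain ⟨i₀, hi₀⟩ := not_forall.1 hsmall
    rw [not_le] at hi₀
    have : Nontrivial (Fin q) := Fin.nontrivial_iff_two_le.2 hq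
    obtain ⟨j, hj⟩ := exists_ne i₀
    have hjsmall := mul_le_one_of_mem_minSetF_of_ne hβ hp hj hi₀
    refine ⟨i₀, p j, pos_of_mem_minSetF hβ hp j, lt_of_mul_lt_mul_left (hjsmall.trans_lt hi₀) hβ,
      fun k hk => ?_⟩
    exact eq_of_mem_minSetF_of_mul_le_one hβ hp (mul_le_one_of_mem_minSetF_of_ne hβ hp hk hi₀)
      hjsmall

end Minimizers

lemma pinskerConst_one_div {q : ℕ} (hq : 3 ≤ q) :
    pinskerConst (1 / q) = q / (q - 1) * betaC q / 2 := by
  have hq3 : (3 : ℝ) ≤ q := by exact_mod_cast hq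
  have hq1 : (q : ℝ) - 1 ≠ 0 := by linarith
  have hq2 : (q : ℝ) - 2 ≠ 0 := by linarith
  rw [pinskerConst, betaC, show (1 - 1 / (q : ℝ)) / (1 / q) = q - 1 by field_simp]
  field_simp

section Gap

variable {q : ℕ} [NeZero q] {β : ℝ}

lemma fFE_uniform : fFE q β 0 (fun _ => 1 / (q : ℝ)) = -(β / (2 * q)) := by
  have hq : (q : ℝ) ≠ 0 := NeZero.ne _
  rw [fFE_zero_eq_sum, Finset.sum_const, Finset.card_univ, Fintype.card_fin, nsmul_eq_mul, siteFE,
    mul_one_div_cancel hq, log_one]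
  field_simp
  ring

lemma klBern_one_div {a b : ℝ} (ha : a + (q - 1) * b = 1) :
    klBern a (1 / q) = a * log (q * a) + (q - 1) * (b * log (q * b)) := by
  have hq : (q : ℝ) ≠ 0 := NeZero.ne _
  have h1 : 1 - a = (q - 1) * b := by linarith
  rw [klBern, h1, show a / (1 / (q : ℝ)) = q * a by field_simp]
  rcases eq_or_ne ((q : ℝ) - 1) 0 with hq1 | hq1
  · simp [hq1]
  · rw [show (q - 1) * b / (1 - 1 / (q : ℝ)) = q * b by field_simp]
    ring

theorem fFE_uniform_lt (hq : 3 ≤ q) (hβ : β < betaC q) {p : Fin q → ℝ} (hp : p ∈ simplexH q)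
    {i₀ : Fin q} {b : ℝ} (hb0 : 0 < b) (hba : b < p i₀) (hk : ∀ k ≠ i₀, p k = b) :
    fFE q β 0 (fun _ => 1 / (q : ℝ)) < fFE q β 0 p := by
  have hsum : p i₀ + (q - 1) * b = 1 := by
    simpa [hp.1] using (sum_comp_eq_of_forall_ne (fun s => s) hk).symm
  rw [fFE_uniform, fFE_zero_eq_sum, sum_comp_eq_of_forall_ne _ hk]
  set a := p i₀
  have hq3 : (3 : ℝ) ≤ q := by exact_mod_cast hq
  have hq1 : (q : ℝ) - 1 ≠ 0 := by linarith
  have ha : 1 / (q : ℝ) < a := by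
    rw [div_lt_iff₀ (by linarith)]
    nlinarith
  have hpinsker := pinskerConst_mul_sq_le_klBern (p := 1 / q) (t := a) (by positivity)
    (by rw [div_lt_div_iff₀ (by linarith) two_pos]; linarith) (by linarith) (by nlinarith)
  rw [pinskerConst_one_div hq, klBern_one_div hsum] at hpinsker
  have hsq : a ^ 2 + (q - 1) * b ^ 2 = 1 / q + q / (q - 1) * (a - 1 / q) ^ 2 := by
    rw [show (q - 1) * b ^ 2 = ((q - 1) * b) ^ 2 / (q - 1) by field_simp,
      show (q - 1) * b = 1 - a by linarith]
    field_simp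
    ring
  have hgap : 0 < q / (q - 1) * (betaC q - β) / 2 * (a - 1 / q) ^ 2 := by
    have : 0 < a - 1 / q := by linarith
    have : 0 < betaC q - β := by linarith
    have : (0 : ℝ) < q - 1 := by linarith
    positivity
  simp only [siteFE]
  linear_combination hpinsker + hgap + β / 2 * hsq

end Gap

/-- For h = 0 and 0 ≤ β < β_c the unique global minimum point of f_{β,0} on ℋ
is the uniform vector (1/q,…,1/q). -/
theorem stmt_2 (q : ℕ) [NeZero q] (hq : 3 ≤ q) (β : ℝ) (hβ0 : 0 ≤ β) (hβ : β < betaC q) :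
    minSetF q β 0 = {fun _ => 1 / (q : ℝ)} := by
  have huniform : ∀ p ∈ minSetF q β 0, p = fun _ => 1 / (q : ℝ) := fun p hp => by
    rcases eq_uniform_or_of_mem_minSetF (by omega) hβ0 hp with h | ⟨i₀, b, hb0, hba, hk⟩
    · exact h
    · exact absurd (hp.2 _ uniform_mem_simplexH) (fFE_uniform_lt hq hβ hp.1 hb0 hba hk).not_ge
  obtain ⟨p, hp⟩ := minSetF_nonempty (q := q) (β := β) 0
  ext x
  refine ⟨huniform x, fun hx => ?_⟩
  rw [hx, ← huniform p hp]
  exact hp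

end CWP
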